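/- (Reference system state bound.) Suppose the reference system state satisfies, for every τ ≥ 0, the bound sup_{0≤t≤τ}‖x_r(t)‖_∞ ≤ G · sup_{0≤t≤τ}‖η_r(t)‖_∞ + H·V + ρ_in, where η_r(t) = f(t, x_r(t)) satisfies ‖f(t,x)‖_∞ ≤ b whenever ‖x‖_∞ ≤ ρ_r, x_r is continuous with ‖x_r(0)‖_∞ < ρ_r, and the constants satisfy G·b < ρ_r − H·V − ρ_in. Then ‖x_r(t)‖_∞ < ρ_r for all t ≥ 0. -/
import Mathlib


/-- reference system state bound. Under the truncated small-gain
inequality and the strict stability condition G·b < ρ_r − H·V − ρ_in, the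
reference state remains strictly inside the ball of radius ρ_r for all t ≥ 0. -/
theorem stmt6 {n m : ℕ} (xr : ℝ → Fin n → ℝ)
    (hcont : ContinuousOn xr (Set.Ici 0))
    (f : ℝ → (Fin n → ℝ) → Fin m → ℝ)
    (G H V ρin b ρr : ℝ)
    (hG : 0 ≤ G) (hH : 0 ≤ H) (hV : 0 ≤ V) (hρin : 0 ≤ ρin) (hb : 0 ≤ b)
    (hfb : ∀ t : ℝ, ∀ x : Fin n → ℝ, ‖x‖ ≤ ρr → ‖f t x‖ ≤ b)
    (hx0 : ‖xr 0‖ < ρr)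
    (hbound : ∀ τ : ℝ, 0 ≤ τ →
      (⨆ t ∈ Set.Icc (0 : ℝ) τ, ‖xr t‖) ≤
        G * (⨆ t ∈ Set.Icc (0 : ℝ) τ, ‖f t (xr t)‖) + H * V + ρin)
    (hsg : G * b < ρr - H * V - ρin) :
    ∀ t : ℝ, 0 ≤ t → ‖xr t‖ < ρr := by
  by_contra h
  push_neg at h
  obtain ⟨t₀, ht₀, ht₀'⟩ := h
  set g : ℝ → ℝ := fun t => ‖xr t‖ with hgdef
  have hgcont : ContinuousOn g (Set.Ici 0) := hcont.norm
  set S : Set ℝ := {t | 0 ≤ t ∧ ρr ≤ g t} with hSdef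
  have hSne : S.Nonempty := ⟨t₀, ht₀, ht₀'⟩
  have hSbdd : BddBelow S := ⟨0, fun t ht => ht.1⟩
  have hSclosed : IsClosed S := by
    have : S = Set.Ici 0 ∩ (g ⁻¹' Set.Ici ρr) := by
      ext t; simp [hSdef, Set.mem_Ici]
    rw [this]
    exact hgcont.preimage_isClosed_of_isClosed isClosed_Ici isClosed_Ici
  set T : ℝ := sInf S with hTdef
  have hTS : T ∈ S := hSclosed.csInf_mem hSne hSbdd
  have hT0' : 0 ≤ T := hTS.1
  have hT0 : 0 < T := by
    rcases lt_or_eq_of_le hT0' with h' | h'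
    · exact h'
    · exfalso; rw [← h'] at hTS; exact absurd hTS.2 (not_le.2 hx0)
  have hlt : ∀ t, 0 ≤ t → t < T → g t < ρr := by
    intro t ht htT
    by_contra hcon
    exact absurd (csInf_le hSbdd ⟨ht, not_lt.1 hcon⟩) (not_le.2 htT)
  -- g T ≤ ρr by continuity from the left
  have hgT : g T ≤ ρr := by
    have hmemcl : T ∈ closure (Set.Ico 0 T) := by
      rw [closure_Ico (ne_of_lt hT0)]
      exact Set.right_mem_Icc.2 hT0'
    haveI : (nhdsWithin T (Set.Ico 0 T)).NeBot :=
      mem_closure_iff_nhdsWithin_neBot.1 hmemcl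
    have hct : ContinuousWithinAt g (Set.Ico 0 T) T :=
      (hgcont T hT0').mono (fun x hx => hx.1)
    refine le_of_tendsto hct.tendsto ?_
    exact eventually_mem_nhdsWithin.mono (fun x hx => (hlt x hx.1 hx.2).le)
  have hle : ∀ t ∈ Set.Icc (0:ℝ) T, g t ≤ ρr := by
    intro t ht
    rcases lt_or_eq_of_le ht.2 with h' | h'
    · exact (hlt t ht.1 h').le
    · rw [h']; exact hgT
  -- bounded above
  obtain ⟨M, hM⟩ := ((isCompact_Icc (a := (0:ℝ)) (b := T)).image_of_continuousOn
    (hgcont.mono (fun x hx => hx.1))).bddAbove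
  have hbdd : BddAbove (Set.range fun t => ⨆ _ : t ∈ Set.Icc (0:ℝ) T, g t) := by
    refine ⟨max M 0, ?_⟩
    rintro x ⟨t, rfl⟩
    show (⨆ _ : t ∈ Set.Icc (0:ℝ) T, g t) ≤ max M 0
    by_cases ht : t ∈ Set.Icc (0:ℝ) T
    · rw [ciSup_pos ht]
      exact le_max_of_le_left (hM ⟨t, ht, rfl⟩)
    · haveI : IsEmpty (t ∈ Set.Icc (0:ℝ) T) := ⟨ht⟩
      rw [Real.iSup_of_isEmpty]
      exact le_max_right M 0
  have hTmem : T ∈ Set.Icc (0:ℝ) T := Set.right_mem_Icc.2 hT0'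
  have hlow : ρr ≤ ⨆ t ∈ Set.Icc (0:ℝ) T, g t := by
    refine le_trans hTS.2 (le_ciSup_of_le hbdd T ?_)
    rw [ciSup_pos hTmem]
  have hB : (⨆ t ∈ Set.Icc (0:ℝ) T, ‖f t (xr t)‖) ≤ b :=
    Real.iSup_le (fun t => Real.iSup_le (fun ht => hfb t (xr t) (hle t ht)) hb) hb
  have hfinal : ρr ≤ G * b + H * V + ρin := by
    calc ρr ≤ ⨆ t ∈ Set.Icc (0:ℝ) T, g t := hlow
    _ ≤ G * (⨆ t ∈ Set.Icc (0:ℝ) T, ‖f t (xr t)‖) + H * V + ρin := hbound T hT0'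
    _ ≤ G * b + H * V + ρin := by nlinarith [mul_le_mul_of_nonneg_left hB hG]
  linarith
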